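/- Let R be a commutative integral domain, t,s units of R, c₀ ∈ R, and define a*b = t·a + s·b + c₀ for a,b ∈ R. Then the right Bol identity E25, namely x*((y*z)*y) = ((x*y)*z)*y for all x,y,z ∈ R, holds if and only if s = 1 and t² = 1 (with no restriction on c₀). -/

import Mathlib

/-!
Both sides of E25 are affine in `x, y, z`, and their difference has coefficients
`t (1 - t²)`, `s (s - 1)`, `t s (s - 1)` and constant term `c₀ (s - t) (t + 1)`.
Cancelling the units `t` and `s`, these vanish exactly when `s = 1` and `t² = 1`.
-/

/-- The affine operation `a * b = t·a + s·b + c₀` on a commutative integral domain. -/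
def affOp {R : Type*} [CommRing R] (t s c₀ : R) (a b : R) : R := t * a + s * b + c₀

theorem affOp_E25_sub {R : Type*} [CommRing R] (t s c₀ x y z : R) :
    affOp t s c₀ x (affOp t s c₀ (affOp t s c₀ y z) y) -
        affOp t s c₀ (affOp t s c₀ (affOp t s c₀ x y) z) y =
      t * (1 - t ^ 2) * x + s * (s - 1) * y + t * s * (s - 1) * z + c₀ * (s - t) * (t + 1) := by
  simp only [affOp]
  ring

theorem forall_affine_eq_zero_iff {R : Type*} [CommRing R] (a b d e : R) :
    (∀ x y z : R, a * x + b * y + d * z + e = 0) ↔ a = 0 ∧ b = 0 ∧ d = 0 ∧ e = 0 := by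
  constructor
  · intro h
    have he : e = 0 := by simpa using h 0 0 0
    have ha : a = 0 := by simpa [he] using h 1 0 0
    have hb : b = 0 := by simpa [he] using h 0 1 0
    have hd : d = 0 := by simpa [he] using h 0 0 1
    exact ⟨ha, hb, hd, he⟩
  · rintro ⟨rfl, rfl, rfl, rfl⟩ x y z
    ring

theorem affine_E25_iff_general {R : Type*} [CommRing R]
    (t s c₀ : R) (ht : IsUnit t) (hs : IsUnit s) :
    (∀ x y z : R,
        affOp t s c₀ x (affOp t s c₀ (affOp t s c₀ y z) y) =
          affOp t s c₀ (affOp t s c₀ (affOp t s c₀ x y) z) y) ↔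
      (s = 1 ∧ t ^ 2 = 1) := by
  simp_rw [← sub_eq_zero (a := affOp t s c₀ _ _), affOp_E25_sub, forall_affine_eq_zero_iff]
  constructor
  · rintro ⟨hx, hy, -, -⟩
    rw [ht.mul_right_eq_zero, sub_eq_zero] at hx
    rw [hs.mul_right_eq_zero, sub_eq_zero] at hy
    exact ⟨hy, hx.symm⟩
  · rintro ⟨rfl, ht2⟩
    refine ⟨by rw [ht2, sub_self, mul_zero], by ring, by ring, ?_⟩
    linear_combination (-c₀) * ht2

/-- An affine quasigroup over an integral domain satisfies the right Bol identity E25,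
`x((yz)y) = ((xy)z)y`, iff `s = 1` and `t² = 1`. -/
theorem affine_E25_iff {R : Type*} [CommRing R] [IsDomain R]
    (t s c₀ : R) (ht : IsUnit t) (hs : IsUnit s) :
    (∀ x y z : R,
        affOp t s c₀ x (affOp t s c₀ (affOp t s c₀ y z) y) =
          affOp t s c₀ (affOp t s c₀ (affOp t s c₀ x y) z) y) ↔
      (s = 1 ∧ t ^ 2 = 1) :=
  affine_E25_iff_general t s c₀ ht hs
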